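/- Let φ be a positive linear map on D×D matrices with ker φ ∩ P_D = {0} and ker φ* ∩ P_D = {0}, and define the projective action φ·X = φ(X)/tr(φ(X)) on 𝕊_D and the contraction coefficient c(φ) = sup{d(φ·X, φ·Y) : X, Y ∈ 𝕊_D}. Then for all X, Y ∈ 𝕊_D, d(φ·X, φ·Y) ≤ c(φ)·d(X,Y). -/

import Mathlib

open Matrix
open scoped ComplexOrder

/-- `m(X,Y) = sup {λ : X - λY ⪰ 0}`. -/
noncomputable def mfun {D : ℕ} (X Y : Matrix (Fin D) (Fin D) ℂ) : ℝ :=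
  sSup {l : ℝ | (X - l • Y).PosSemidef}

/-- The projective metric `d(X,Y) = (1 - m(X,Y)m(Y,X))/(1 + m(X,Y)m(Y,X))`. -/
noncomputable def dfun {D : ℕ} (X Y : Matrix (Fin D) (Fin D) ℂ) : ℝ :=
  (1 - mfun X Y * mfun Y X) / (1 + mfun X Y * mfun Y X)

/-- The projective action `φ·X = φ(X)/tr(φ(X))`. -/
noncomputable def projAct {D : ℕ}
    (φ : Matrix (Fin D) (Fin D) ℂ →ₗ[ℂ] Matrix (Fin D) (Fin D) ℂ)
    (X : Matrix (Fin D) (Fin D) ℂ) : Matrix (Fin D) (Fin D) ℂ :=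
  ((φ X).trace)⁻¹ • φ X

/-- The contraction coefficient `c(φ) = sup {d(φ·X, φ·Y) : X, Y ∈ 𝕊_D}`. -/
noncomputable def contr {D : ℕ}
    (φ : Matrix (Fin D) (Fin D) ℂ →ₗ[ℂ] Matrix (Fin D) (Fin D) ℂ) : ℝ :=
  sSup {r : ℝ | ∃ X Y : Matrix (Fin D) (Fin D) ℂ, X.PosSemidef ∧ X.trace = 1 ∧
    Y.PosSemidef ∧ Y.trace = 1 ∧ r = dfun (projAct φ X) (projAct φ Y)}

/-!
For `X ≠ Y` in `𝕊_D` put `m = m(X,Y)` and `M = m(Y,X)⁻¹`; then `U = X - mY` and `V = MY - X` are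
positive and `d(X,Y) = (M - m)/(M + m)`. The optimal bounds `φU ⪰ μ φV` and `φV ⪰ ν φU` sandwich
`φX` between multiples of `φY`, giving
`m(φX,φY) m(φY,φX) ≥ (m + μM)(1 + ν) / ((1 + μ)(M + νm))`, hence
`d(φX,φY) ≤ (M - m)(1 - μν) / ((M + m)(1 + μν) + 2μM + 2νm)`. Since `d` is invariant under positive
rescaling, `(1 - μν)/(1 + μν) = d(φU,φV)` is a value of `d(φ·U', φ·V')` for the trace-one
normalizations `U'`, `V'`, so it is at most `c(φ)`.
-/

namespace Matrix.PosSemidef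

variable {n : Type*} {A : Matrix n n ℂ}

lemma re_trace_pos [Fintype n] (hA : A.PosSemidef) (h0 : A ≠ 0) : 0 < A.trace.re :=
  (Complex.pos_iff.mp <| hA.trace_nonneg.lt_of_ne' <| mt hA.trace_eq_zero_iff.mp h0).1

lemma ofReal_re_trace [Fintype n] (hA : A.PosSemidef) : (A.trace.re : ℂ) = A.trace :=
  Complex.ext rfl (by simp [← (Complex.nonneg_iff.mp hA.trace_nonneg).2])

lemma smul_iff {c : ℝ} (hc : 0 < c) : (c • A).PosSemidef ↔ A.PosSemidef :=
  ⟨fun h => by simpa [smul_smul, hc.ne'] using h.smul (inv_nonneg.mpr hc.le),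
    fun h => h.smul hc.le⟩

end Matrix.PosSemidef

variable {D : ℕ} {X Y : Matrix (Fin D) (Fin D) ℂ}

lemma isClosed_setOf_posSemidef_sub_smul (X Y : Matrix (Fin D) (Fin D) ℂ) :
    IsClosed {l : ℝ | (X - l • Y).PosSemidef} := by
  simp only [posSemidef_iff_dotProduct_mulVec, Set.ofPred_and, Set.ofPred_forall]
  refine .inter (isClosed_eq (by fun_prop) (by fun_prop)) (isClosed_iInter fun x => ?_)
  exact isClosed_le continuous_const (by fun_prop)

lemma le_re_trace_div_of_posSemidef_sub_smul {l : ℝ} (hl : (X - l • Y).PosSemidef)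
    (hY : 0 < Y.trace.re) : l ≤ X.trace.re / Y.trace.re := by
  have htr := (Complex.nonneg_iff.mp hl.trace_nonneg).1
  simp only [trace_sub, trace_smul, Complex.sub_re, Complex.real_smul,
    Complex.re_ofReal_mul] at htr
  rw [le_div_iff₀ hY]
  linarith

lemma bddAbove_setOf_posSemidef_sub_smul (hY : Y.PosSemidef) (hY0 : Y ≠ 0) :
    BddAbove {l : ℝ | (X - l • Y).PosSemidef} :=
  ⟨_, fun _ hl => le_re_trace_div_of_posSemidef_sub_smul hl (hY.re_trace_pos hY0)⟩

lemma le_mfun (hY : Y.PosSemidef) (hY0 : Y ≠ 0) {l : ℝ} (hl : (X - l • Y).PosSemidef) :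
    l ≤ mfun X Y :=
  le_csSup (bddAbove_setOf_posSemidef_sub_smul hY hY0) hl

-- Also when the set is unbounded above, where `sSup` is `0`.
lemma mfun_nonneg (hX : X.PosSemidef) : 0 ≤ mfun X Y :=
  Real.sSup_nonneg' ⟨0, by simpa using hX, le_rfl⟩

lemma mfun_le_re_trace_div (hX : X.PosSemidef) (hY : Y.PosSemidef) (hY0 : Y ≠ 0) :
    mfun X Y ≤ X.trace.re / Y.trace.re :=
  csSup_le ⟨0, by simpa using hX⟩ fun _ hl =>
    le_re_trace_div_of_posSemidef_sub_smul hl (hY.re_trace_pos hY0)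

lemma posSemidef_sub_mfun_smul (hX : X.PosSemidef) (hY : Y.PosSemidef) (hY0 : Y ≠ 0) :
    (X - mfun X Y • Y).PosSemidef :=
  (isClosed_setOf_posSemidef_sub_smul X Y).csSup_mem ⟨0, by simpa using hX⟩
    (bddAbove_setOf_posSemidef_sub_smul hY hY0)

open scoped Pointwise in
lemma mfun_smul_smul {s t : ℝ} (hs : 0 < s) (ht : 0 < t) :
    mfun (s • X) (t • Y) = s / t * mfun X Y := by
  have hst : s / t ≠ 0 := by positivity
  have : {l : ℝ | (s • X - l • t • Y).PosSemidef} =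
      (s / t) • {l : ℝ | (X - l • Y).PosSemidef} := by
    ext l
    have hsplit : s • X - l • t • Y = s • (X - ((s / t)⁻¹ * l) • Y) := by
      rw [smul_sub, smul_smul, smul_smul]
      congr 2
      field_simp
    rw [Set.mem_smul_set_iff_inv_smul_mem₀ hst, Set.mem_ofPred_eq, Set.mem_ofPred_eq, hsplit,
      Matrix.PosSemidef.smul_iff hs, smul_eq_mul]
  rw [mfun, this, Real.sSup_smul_of_nonneg (by positivity), smul_eq_mul, mfun]

lemma dfun_smul_smul {s t : ℝ} (hs : 0 < s) (ht : 0 < t) :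
    dfun (s • X) (t • Y) = dfun X Y := by
  have : s / t * mfun X Y * (t / s * mfun Y X) = mfun X Y * mfun Y X := by
    field_simp
  rw [dfun, dfun, mfun_smul_smul hs ht, mfun_smul_smul ht hs, this]

lemma mfun_self (hX : X.PosSemidef) (hX0 : X ≠ 0) : mfun X X = 1 := by
  refine le_antisymm ?_ (le_mfun (l := 1) hX hX0 (by simpa using PosSemidef.zero))
  simpa [(hX.re_trace_pos hX0).ne'] using mfun_le_re_trace_div hX hX hX0

lemma dfun_self (hX : X.PosSemidef) (hX0 : X ≠ 0) : dfun X X = 0 := by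
  simp [dfun, mfun_self hX hX0]

lemma dfun_le_one (hX : X.PosSemidef) (hY : Y.PosSemidef) : dfun X Y ≤ 1 := by
  have := mul_nonneg (mfun_nonneg (Y := Y) hX) (mfun_nonneg (Y := X) hY)
  rw [dfun, div_le_one (by linarith)]
  linarith

lemma ne_zero_of_trace_eq_one (h : X.trace = 1) : X ≠ 0 := by
  rintro rfl
  simp at h

lemma sub_smul_ne_zero_of_trace_eq_one (htX : X.trace = 1) (htY : Y.trace = 1) {l : ℝ}
    (hl : l ≠ 1) : X - l • Y ≠ 0 := by
  intro h
  have : ((1 - l : ℝ) : ℂ) = 0 := by simpa [trace_sub, trace_smul, htX, htY] using congrArg trace h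
  exact hl (by linarith [Complex.ofReal_eq_zero.mp this])

lemma mfun_lt_one (hX : X.PosSemidef) (htX : X.trace = 1) (hY : Y.PosSemidef)
    (htY : Y.trace = 1) (hXY : X ≠ Y) : mfun X Y < 1 := by
  have hY0 := ne_zero_of_trace_eq_one htY
  refine ((mfun_le_re_trace_div hX hY hY0).trans_eq (by simp [htX, htY])).lt_of_ne fun h => ?_
  have hXY' := posSemidef_sub_mfun_smul hX hY hY0
  rw [h, one_smul] at hXY'
  exact hXY (sub_eq_zero.mp (hXY'.trace_eq_zero_iff.mp (by simp [trace_sub, htX, htY])))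

lemma dfun_eq_div (h : mfun Y X ≠ 0) :
    dfun X Y = ((mfun Y X)⁻¹ - mfun X Y) / ((mfun Y X)⁻¹ + mfun X Y) := by
  rw [dfun, ← mul_div_mul_left _ ((mfun Y X)⁻¹ + mfun X Y) h, mul_sub, mul_add,
    mul_inv_cancel₀ h, mul_comm (mfun Y X)]

lemma one_sub_div_one_add_le_of_contraction {m M μ ν c t : ℝ} (hm : 0 ≤ m) (hmM : m ≤ M)
    (hM : 0 < M) (hμ : 0 ≤ μ) (hν : 0 ≤ ν) (hc : 0 ≤ c) (hcμν : (1 - μ * ν) / (1 + μ * ν) ≤ c)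
    (ht : (m + μ * M) / (1 + μ) * ((1 + ν) / (M + ν * m)) ≤ t) :
    (1 - t) / (1 + t) ≤ c * ((M - m) / (M + m)) := by
  set s := (m + μ * M) / (1 + μ) * ((1 + ν) / (M + ν * m))
  have hs : 0 ≤ s := by positivity
  have hMm : 0 < M + m := by linarith
  have hden : 0 < (M + m) * (1 + μ * ν) + 2 * μ * M + 2 * ν * m := by positivity
  have hs_eq : (1 - s) / (1 + s) =
      (M - m) * (1 - μ * ν) / ((M + m) * (1 + μ * ν) + 2 * μ * M + 2 * ν * m) := by
    have : M + ν * m ≠ 0 := by positivity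
    rw [div_eq_div_iff (by positivity) hden.ne']
    simp only [s]
    field_simp
    ring
  have hcμν' : 1 - μ * ν ≤ c * (1 + μ * ν) := (div_le_iff₀ (by positivity)).mp hcμν
  calc (1 - t) / (1 + t) ≤ (1 - s) / (1 + s) := by
        rw [div_le_div_iff₀ (by linarith) (by linarith)]
        nlinarith
    _ = (M - m) * (1 - μ * ν) / ((M + m) * (1 + μ * ν) + 2 * μ * M + 2 * ν * m) := hs_eq
    _ ≤ c * ((M - m) / (M + m)) := by
        rw [mul_div_assoc', div_le_div_iff₀ hden hMm]
        have hMm' : 0 ≤ M - m := by linarith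
        nlinarith [mul_le_mul_of_nonneg_left hcμν' hMm', mul_nonneg hMm' hMm.le,
          mul_nonneg (mul_nonneg hc hMm') (by positivity : 0 ≤ 2 * μ * M + 2 * ν * m)]

lemma dfun_le_of_sandwich {A B : Matrix (Fin D) (Fin D) ℂ} (hA : A.PosSemidef) (hA0 : A ≠ 0)
    (hB : B.PosSemidef) (hB0 : B ≠ 0) {m M c : ℝ} (hm : 0 ≤ m) (hmM : m ≤ M) (hM : 0 < M)
    (hU : (A - m • B).PosSemidef) (hU0 : A - m • B ≠ 0)
    (hV : (M • B - A).PosSemidef) (hV0 : M • B - A ≠ 0)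
    (hc : 0 ≤ c) (hcUV : dfun (A - m • B) (M • B - A) ≤ c) :
    dfun A B ≤ c * ((M - m) / (M + m)) := by
  set μ := mfun (A - m • B) (M • B - A)
  set ν := mfun (M • B - A) (A - m • B)
  have hμ : 0 ≤ μ := mfun_nonneg hU
  have hν : 0 ≤ ν := mfun_nonneg hV
  have hp : (m + μ * M) / (1 + μ) ≤ mfun A B := by
    refine le_mfun hB hB0 ?_
    convert (posSemidef_sub_mfun_smul hU hV hV0).smul (inv_nonneg.mpr (by positivity : 0 ≤ 1 + μ))
      using 1
    rw [eq_inv_smul_iff₀ (by positivity)]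
    have : (1 + μ) * ((m + μ * M) / (1 + μ)) = m + μ * M := by field_simp
    linear_combination (norm := module) -(this • B)
  have hq : (1 + ν) / (M + ν * m) ≤ mfun B A := by
    refine le_mfun hA hA0 ?_
    convert (posSemidef_sub_mfun_smul hV hU hU0).smul
      (inv_nonneg.mpr (by positivity : 0 ≤ M + ν * m)) using 1
    rw [eq_inv_smul_iff₀ (by positivity)]
    have : (M + ν * m) * ((1 + ν) / (M + ν * m)) = 1 + ν := by field_simp
    linear_combination (norm := module) -(this • A)
  exact one_sub_div_one_add_le_of_contraction hm hmM hM hμ hν hc hcUV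
    (mul_le_mul hp hq (by positivity) ((by positivity : (0 : ℝ) ≤ _).trans hp))

section positiveMap

variable {φ : Matrix (Fin D) (Fin D) ℂ →ₗ[ℂ] Matrix (Fin D) (Fin D) ℂ}

lemma projAct_eq_smul (h : (φ X).PosSemidef) : projAct φ X = (φ X).trace.re⁻¹ • φ X := by
  rw [projAct, ← h.ofReal_re_trace, ← Complex.ofReal_inv, Complex.coe_smul,
    Complex.ofReal_re]

lemma posSemidef_projAct (h : (φ X).PosSemidef) : (projAct φ X).PosSemidef :=
  h.smul (inv_nonneg_of_nonneg h.trace_nonneg)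

lemma projAct_smul {c : ℂ} (hc : c ≠ 0) (X : Matrix (Fin D) (Fin D) ℂ) :
    projAct φ (c • X) = projAct φ X := by
  rw [projAct, projAct, map_smul, trace_smul, smul_eq_mul, mul_inv, smul_smul, mul_right_comm,
    inv_mul_cancel₀ hc, one_mul]

lemma dfun_projAct (hX : (φ X).PosSemidef) (hX0 : φ X ≠ 0) (hY : (φ Y).PosSemidef)
    (hY0 : φ Y ≠ 0) : dfun (projAct φ X) (projAct φ Y) = dfun (φ X) (φ Y) := by
  rw [projAct_eq_smul hX, projAct_eq_smul hY,
    dfun_smul_smul (inv_pos.mpr (hX.re_trace_pos hX0)) (inv_pos.mpr (hY.re_trace_pos hY0))]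

variable (hpos : ∀ M : Matrix (Fin D) (Fin D) ℂ, M.PosSemidef → (φ M).PosSemidef)
include hpos

lemma dfun_projAct_le_contr (hX : X.PosSemidef) (htX : X.trace = 1) (hY : Y.PosSemidef)
    (htY : Y.trace = 1) : dfun (projAct φ X) (projAct φ Y) ≤ contr φ := by
  refine le_csSup ⟨1, ?_⟩ ⟨X, Y, hX, htX, hY, htY, rfl⟩
  rintro _ ⟨X, Y, hX, -, hY, -, rfl⟩
  exact dfun_le_one (posSemidef_projAct (hpos X hX)) (posSemidef_projAct (hpos Y hY))

variable (hker : ∀ M : Matrix (Fin D) (Fin D) ℂ, M.PosSemidef → φ M = 0 → M = 0)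
include hker

lemma dfun_map_le_contr (hX : X.PosSemidef) (hX0 : X ≠ 0) (hY : Y.PosSemidef) (hY0 : Y ≠ 0) :
    dfun (φ X) (φ Y) ≤ contr φ := by
  have htX : X.trace ≠ 0 := mt hX.trace_eq_zero_iff.mp hX0
  have htY : Y.trace ≠ 0 := mt hY.trace_eq_zero_iff.mp hY0
  rw [← dfun_projAct (hpos X hX) (mt (hker X hX) hX0) (hpos Y hY) (mt (hker Y hY) hY0),
    ← projAct_smul (inv_ne_zero htX) X, ← projAct_smul (inv_ne_zero htY) Y]
  refine dfun_projAct_le_contr hpos (hX.smul (inv_nonneg_of_nonneg hX.trace_nonneg)) ?_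
    (hY.smul (inv_nonneg_of_nonneg hY.trace_nonneg)) ?_
  · rw [trace_smul, smul_eq_mul, inv_mul_cancel₀ htX]
  · rw [trace_smul, smul_eq_mul, inv_mul_cancel₀ htY]

lemma contr_nonneg (hX : X.PosSemidef) (hX0 : X ≠ 0) : 0 ≤ contr φ :=
  (dfun_self (hpos X hX) (mt (hker X hX) hX0)).symm.trans_le
    (dfun_map_le_contr hpos hker hX hX0 hX hX0)

lemma dfun_map_le_contr_mul (hX : X.PosSemidef) (htX : X.trace = 1) (hY : Y.PosSemidef)
    (htY : Y.trace = 1) (hXY : X ≠ Y) (hYX : 0 < mfun Y X) :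
    dfun (φ X) (φ Y) ≤ contr φ * dfun X Y := by
  have hX0 := ne_zero_of_trace_eq_one htX
  have hY0 := ne_zero_of_trace_eq_one htY
  set m := mfun X Y
  set M := (mfun Y X)⁻¹
  have hm1 : m < 1 := mfun_lt_one hX htX hY htY hXY
  have hYX1 : mfun Y X < 1 := mfun_lt_one hY htY hX htX hXY.symm
  have hM1 : 1 < M := (one_lt_inv₀ hYX).mpr hYX1
  have hV_eq : M • Y - X = M • (Y - mfun Y X • X) := by
    rw [smul_sub, smul_smul, inv_mul_cancel₀ hYX.ne', one_smul]
  have hU := posSemidef_sub_mfun_smul hX hY hY0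
  have hU0 := sub_smul_ne_zero_of_trace_eq_one htX htY hm1.ne
  have hV : (M • Y - X).PosSemidef :=
    hV_eq ▸ (posSemidef_sub_mfun_smul hY hX hX0).smul (inv_nonneg.mpr hYX.le)
  have hV0 : M • Y - X ≠ 0 :=
    hV_eq ▸ smul_ne_zero (inv_ne_zero hYX.ne') (sub_smul_ne_zero_of_trace_eq_one htY htX hYX1.ne)
  have hφU : φ (X - m • Y) = φ X - m • φ Y := by rw [map_sub, LinearMap.map_smul_of_tower]
  have hφV : φ (M • Y - X) = M • φ Y - φ X := by rw [map_sub, LinearMap.map_smul_of_tower]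
  rw [dfun_eq_div hYX.ne']
  refine dfun_le_of_sandwich (hpos X hX) (mt (hker X hX) hX0) (hpos Y hY) (mt (hker Y hY) hY0)
    (mfun_nonneg hX) (by linarith) (by linarith) (hφU ▸ hpos _ hU) (hφU ▸ mt (hker _ hU) hU0)
    (hφV ▸ hpos _ hV) (hφV ▸ mt (hker _ hV) hV0) (contr_nonneg hpos hker hX hX0) ?_
  rw [← hφU, ← hφV]
  exact dfun_map_le_contr hpos hker hU hU0 hV hV0

end positiveMap

theorem stmt14_general {D : ℕ}
    (φ : Matrix (Fin D) (Fin D) ℂ →ₗ[ℂ] Matrix (Fin D) (Fin D) ℂ)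
    (hpos : ∀ M : Matrix (Fin D) (Fin D) ℂ, M.PosSemidef → (φ M).PosSemidef)
    (hker : ∀ M : Matrix (Fin D) (Fin D) ℂ, M.PosSemidef → φ M = 0 → M = 0) :
    ∀ X Y : Matrix (Fin D) (Fin D) ℂ, X.PosSemidef → X.trace = 1 →
      Y.PosSemidef → Y.trace = 1 →
      dfun (projAct φ X) (projAct φ Y) ≤ contr φ * dfun X Y := by
  intro X Y hX htX hY htY
  have hX0 := ne_zero_of_trace_eq_one htX
  have hY0 := ne_zero_of_trace_eq_one htY
  rw [dfun_projAct (hpos X hX) (mt (hker X hX) hX0) (hpos Y hY) (mt (hker Y hY) hY0)]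
  obtain rfl | hXY := eq_or_ne X Y
  · rw [dfun_self (hpos X hX) (mt (hker X hX) hX0), dfun_self hX hX0, mul_zero]
  obtain hYX | hYX := (mfun_nonneg (Y := X) hY).eq_or_lt
  · have hd : dfun X Y = 1 := by simp [dfun, ← hYX]
    rw [hd, mul_one]
    exact dfun_map_le_contr hpos hker hX hX0 hY hY0
  · exact dfun_map_le_contr_mul hpos hker hX htX hY htY hXY hYX

theorem stmt14 {D : ℕ}
    (φ φs : Matrix (Fin D) (Fin D) ℂ →ₗ[ℂ] Matrix (Fin D) (Fin D) ℂ)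
    (hadj : ∀ A B : Matrix (Fin D) (Fin D) ℂ, (Aᴴ * φ B).trace = ((φs A)ᴴ * B).trace)
    (hpos : ∀ M : Matrix (Fin D) (Fin D) ℂ, M.PosSemidef → (φ M).PosSemidef)
    (hker : ∀ M : Matrix (Fin D) (Fin D) ℂ, M.PosSemidef → φ M = 0 → M = 0)
    (hkers : ∀ M : Matrix (Fin D) (Fin D) ℂ, M.PosSemidef → φs M = 0 → M = 0) :
    ∀ X Y : Matrix (Fin D) (Fin D) ℂ, X.PosSemidef → X.trace = 1 →
      Y.PosSemidef → Y.trace = 1 →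
      dfun (projAct φ X) (projAct φ Y) ≤ contr φ * dfun X Y :=
  stmt14_general φ hpos hker
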